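/- Let $Q_1, \dots, Q_m$ be axis-parallel cubes in $\mathbf{R}^n$ such that $l(Q_1) \le l(Q_j)$ for all $j$ and such that $Q_1^* \cap \dots \cap Q_m^* \ne \emptyset$, where $Q_j^*$ is the cube concentric with $Q_j$ of side length $2\sqrt{n}\, l(Q_j)$. Then there exists an axis-parallel cube $R$ such that: (i) $Q_1^* \cap \dots \cap Q_m^* \subseteq R$; (ii) $|R| \ge |Q_1|$; and (iii) $R^* \subseteq Q_j^{**}$ for every $j$, where $R^*$ is the cube concentric with $R$ of side length $2\sqrt{n}\, l(R)$ and $Q_j^{**}$ is the cube concentric with $Q_j$ of side length $10 n\, l(Q_j)$. (In fact one may take $R$ centered at any point of $Q_1^* \cap \dots \cap Q_m^*$ with side length $4\sqrt{n}\, l(Q_1)$.) -/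
import Mathlib


open MeasureTheory Set

noncomputable section

/-- The closed axis-parallel cube in `ℝⁿ` with center `c` and side length `l`. -/
def Cube {n : ℕ} (c : EuclideanSpace ℝ (Fin n)) (l : ℝ) : Set (EuclideanSpace ℝ (Fin n)) :=
  {x | ∀ i, x i ∈ Set.Icc (c i - l / 2) (c i + l / 2)}

/-- If `Q_1, …, Q_m` are cubes with `l(Q_1)` smallest and with
`Q_1^* ∩ ⋯ ∩ Q_m^* ≠ ∅` (where `Q^*` is concentric with `Q` of side `2√n l(Q)`),
then there is a cube `R` with `Q_1^* ∩ ⋯ ∩ Q_m^* ⊆ R`, `|R| ≥ |Q_1|`, and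
`R^* ⊆ Q_j^{**}` for every `j`, where `Q_j^{**}` is concentric with `Q_j` of side
`10 n l(Q_j)`. -/
theorem stmt9 (n m : ℕ) (hn : 1 ≤ n) (hm : 0 < m)
    (c : Fin m → EuclideanSpace ℝ (Fin n)) (l : Fin m → ℝ) (hl : ∀ j, 0 < l j)
    (hsmall : ∀ j, l ⟨0, hm⟩ ≤ l j)
    (hne : (⋂ j, Cube (c j) (2 * Real.sqrt n * l j)).Nonempty) :
    ∃ (cR : EuclideanSpace ℝ (Fin n)) (lR : ℝ), 0 < lR ∧
      (⋂ j, Cube (c j) (2 * Real.sqrt n * l j)) ⊆ Cube cR lR ∧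
      volume (Cube (c ⟨0, hm⟩) (l ⟨0, hm⟩)) ≤ volume (Cube cR lR) ∧
      ∀ j, Cube cR (2 * Real.sqrt n * lR) ⊆ Cube (c j) (10 * n * l j) := by
  obtain ⟨p, hp⟩ := hne
  set j0 : Fin m := ⟨0, hm⟩
  have hnR : (1:ℝ) ≤ (n:ℝ) := by exact_mod_cast hn
  have hs0 : (0:ℝ) ≤ Real.sqrt n := Real.sqrt_nonneg n
  have hs1 : (1:ℝ) ≤ Real.sqrt n := by
    rw [show (1:ℝ) = Real.sqrt 1 by simp]
    exact Real.sqrt_le_sqrt hnR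
  have hss : Real.sqrt n * Real.sqrt n = (n:ℝ) :=
    Real.mul_self_sqrt (by positivity)
  have hsn : Real.sqrt n ≤ (n:ℝ) := by nlinarith [hs1, hss]
  have hl0 : 0 < l j0 := hl j0
  have hpj : ∀ j, p ∈ Cube (c j) (2 * Real.sqrt n * l j) := by
    intro j; exact mem_iInter.mp hp j
  refine ⟨p, 4 * Real.sqrt n * l j0, by positivity, ?_, ?_, ?_⟩
  · intro x hx i
    have hxj := mem_iInter.mp hx j0 i
    have hpj0 := hpj j0 i
    obtain ⟨h1, h2⟩ := hxj
    obtain ⟨h3, h4⟩ := hpj0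
    constructor <;> nlinarith [hl j0, hs0]
  · have heq : volume (Cube (c j0) (l j0)) = volume (Cube p (l j0)) := by
      have : Cube (c j0) (l j0) = (fun x => (p - c j0) + x) ⁻¹' (Cube p (l j0)) := by
        ext x
        simp only [Cube, mem_setOf_eq, mem_preimage]
        constructor
        · intro h i
          have := h i
          have hadd : ((p - c j0) + x) i = p i - c j0 i + x i := rfl
          rw [hadd]
          exact ⟨by linarith [this.1], by linarith [this.2]⟩
        · intro h i
          have := h i
          have hadd : ((p - c j0) + x) i = p i - c j0 i + x i := rfl
          rw [hadd] at this
          exact ⟨by linarith [this.1], by linarith [this.2]⟩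
      rw [this, measure_preimage_add]
    rw [heq]
    apply measure_mono
    intro x hx i
    have := hx i
    constructor <;> nlinarith [this.1, this.2, hl j0, hs1]
  · intro j x hx i
    have h1 := hx i
    have h2 := hpj j i
    have hlj := hl j
    have hsm := hsmall j
    constructor
    · nlinarith [h1.1, h2.1]
    · nlinarith [h1.2, h2.2]

end
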